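/- arXiv:1707.08367 — 3 statements merged into one kernel-verified Lean document; each statement's English description precedes it below -/
import Mathlib

section
/- Let p, q be real (or elements of a commutative ring) with a = q^{ℓ₁}p^{ℓ₂}, ℓ = ℓ₁+ℓ₂ ≥ 2, m₁ = k₁−ℓ₁+1 ≥ 1. In the formal power series ring R[t][[z]], the series Φ(t,z) = 1/(1 − z − a·zˡ·(t−1)·(1 − (qz)^{m₁})) satisfies Φ(t,z) = Σ_{u≥0} Σ_{v≥0} multinomialCoeff(n−u(ℓ−1)−v(ℓ+m₁−1); n−uℓ−v(ℓ+m₁), u, v) · (−1)ᵛ · q^{v·m₁} · (a(t−1))^{u+v} · zⁿ summed over all n, u, v with uℓ + v(ℓ+m₁) ≤ n, i.e., the coefficient of zⁿ in Φ(t,z) equals Σ_{u=0}^{⌊n/ℓ⌋} Σ_{v=0}^{⌊(n−uℓ)/(ℓ+m₁)⌋} (n−u(ℓ−1)−v(ℓ+m₁−1))!/((n−uℓ−v(ℓ+m₁))!·u!·v!) · (−1)ᵛ q^{v m₁} (a(t−1))^{u+v}. -/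
/-!
Write `w = z + A z^ℓ + B z^L` with `A = a(t-1)`, `B = -q^{m₁} a(t-1)` and `L = ℓ + m₁`, so that
`Φ = 1/(1 - w)`. Since `w` has no constant term, the coefficient of `zⁿ` in `Φ` is that of the
truncated geometric series `∑_{m ≤ n} wᵐ`. By the multinomial theorem, `wᵐ` is a sum of the terms
`(m; i, u, v) Aᵘ Bᵛ z^{i + uℓ + vL}` with `i + u + v = m`; those contributing to `zⁿ` are indexed by
the lattice points `(u, v)` with `uℓ + vL ≤ n`, with `i = n - uℓ - vL`, and
`i + u + v = n - u(ℓ-1) - v(L-1)`.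
-/

open PowerSeries Finset

def latticeTriangle (ℓ L n : ℕ) : Finset (ℕ × ℕ) :=
  (range (n + 1) ×ˢ range (n + 1)).filter fun p => p.1 * ℓ + p.2 * L ≤ n

theorem mem_latticeTriangle {ℓ L n : ℕ} (hℓ : 0 < ℓ) (hL : 0 < L) {p : ℕ × ℕ} :
    p ∈ latticeTriangle ℓ L n ↔ p.1 * ℓ + p.2 * L ≤ n := by
  have := Nat.le_mul_of_pos_right p.1 hℓ
  have := Nat.le_mul_of_pos_right p.2 hL
  simp only [latticeTriangle, mem_filter, mem_product, mem_range]
  omega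

theorem sum_latticeTriangle {M : Type*} [AddCommMonoid M] {ℓ L : ℕ} (hℓ : 0 < ℓ) (hL : 0 < L)
    (n : ℕ) (f : ℕ → ℕ → M) :
    ∑ p ∈ latticeTriangle ℓ L n, f p.1 p.2 =
      ∑ u ∈ range (n / ℓ + 1), ∑ v ∈ range ((n - u * ℓ) / L + 1), f u v := by
  refine sum_finset_product _ _ _ fun p => ?_
  rw [mem_latticeTriangle hℓ hL, mem_range, mem_range, Nat.lt_succ_iff, Nat.lt_succ_iff,
    Nat.le_div_iff_mul_le hℓ, Nat.le_div_iff_mul_le hL]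
  omega

section
variable {R : Type*} [CommRing R]

theorem PowerSeries.coeff_eq_coeff_sum_range_pow {Φ w : R⟦X⟧}
    (hΦ : Φ * (1 - w) = 1) (hw : constantCoeff w = 0) (n : ℕ) :
    coeff n Φ = coeff n (∑ m ∈ range (n + 1), w ^ m) := by
  have hΦ_eq : Φ = ∑ m ∈ range (n + 1), w ^ m + Φ * w ^ (n + 1) := by
    calc Φ = Φ * ((1 - w) * ∑ m ∈ range (n + 1), w ^ m + w ^ (n + 1)) := by
          rw [mul_neg_geom_sum, sub_add_cancel, mul_one]
      _ = _ := by rw [mul_add, ← mul_assoc, hΦ, one_mul]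
  have h_dvd : X ^ (n + 1) ∣ Φ * w ^ (n + 1) :=
    (pow_dvd_pow_of_dvd (X_dvd_iff.mpr hw) _).mul_left Φ
  rw [hΦ_eq, map_add, X_pow_dvd_iff.mp h_dvd n n.lt_succ_self, add_zero]

theorem PowerSeries.coeff_trinomial_pow (A B : R) (ℓ L m n : ℕ) :
    coeff n ((X + C A * X ^ ℓ + C B * X ^ L) ^ m) =
      ∑ k ∈ (univ : Finset (Fin 3)).piAntidiag m,
        if k 0 + k 1 * ℓ + k 2 * L = n then Nat.multinomial univ k • (A ^ k 1 * B ^ k 2) else 0 := by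
  rw [show X + C A * X ^ ℓ + C B * X ^ L = ∑ i, ![X, C A * X ^ ℓ, C B * X ^ L] i by
    simp [Fin.sum_univ_three], sum_pow_eq_sum_piAntidiag, map_sum]
  refine sum_congr rfl fun k _ => ?_
  have hmonomial : ∏ i, ![X, C A * X ^ ℓ, C B * X ^ L] i ^ k i =
      C (A ^ k 1 * B ^ k 2) * X ^ (k 0 + k 1 * ℓ + k 2 * L) := by
    rw [Fin.prod_univ_three]
    simp only [Matrix.cons_val, map_mul, map_pow, mul_pow, pow_add, pow_mul']
    ring
  rw [hmonomial, ← map_natCast (C (R := R)), ← mul_assoc, ← map_mul, coeff_C_mul_X_pow, nsmul_eq_mul]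
  simp only [eq_comm]

theorem PowerSeries.coeff_sum_range_trinomial_pow (A B : R) {ℓ L : ℕ} (hℓ : 0 < ℓ) (hL : 0 < L)
    (n : ℕ) :
    coeff n (∑ m ∈ range (n + 1), (X + C A * X ^ ℓ + C B * X ^ L) ^ m) =
      ∑ p ∈ latticeTriangle ℓ L n,
        Nat.multinomial univ ![n - p.1 * ℓ - p.2 * L, p.1, p.2] • (A ^ p.1 * B ^ p.2) := by
  have hdisj : (range (n + 1) : Set ℕ).PairwiseDisjoint ((univ : Finset (Fin 3)).piAntidiag ·) :=
    fun m _ m' _ hne => disjoint_left.mpr fun k hk hk' =>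
      hne ((mem_piAntidiag.mp hk).1.symm.trans (mem_piAntidiag.mp hk').1)
  simp_rw [map_sum, coeff_trinomial_pow]
  rw [← sum_biUnion hdisj, ← sum_filter]
  set S := ((range (n + 1)).biUnion ((univ : Finset (Fin 3)).piAntidiag ·)).filter
    fun k => k 0 + k 1 * ℓ + k 2 * L = n
  have mem_S {k : Fin 3 → ℕ} : k ∈ S ↔ k 0 + k 1 * ℓ + k 2 * L = n := by
    have := Nat.le_mul_of_pos_right (k 1) hℓ
    have := Nat.le_mul_of_pos_right (k 2) hL
    simp only [S, mem_filter, mem_biUnion, mem_range, mem_piAntidiag, Fin.sum_univ_three,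
      mem_univ, implies_true, and_true, exists_eq_right']
    omega
  have h_left_inv {k : Fin 3 → ℕ} (hk : k ∈ S) : ![n - k 1 * ℓ - k 2 * L, k 1, k 2] = k := by
    rw [mem_S] at hk
    ext i
    fin_cases i <;> simp
    omega
  refine sum_nbij' (fun k => (k 1, k 2)) (fun p => ![n - p.1 * ℓ - p.2 * L, p.1, p.2])
    (fun k hk => ?_) (fun p hp => ?_) (fun k hk => h_left_inv hk) (fun p _ => rfl) (fun k hk => ?_)
  · rw [mem_S] at hk
    rw [mem_latticeTriangle hℓ hL]
    dsimp only
    omega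
  · rw [mem_latticeTriangle hℓ hL] at hp
    simp only [mem_S, Matrix.cons_val]
    omega
  · dsimp only
    rw [h_left_inv hk]

open Nat in
theorem PowerSeries.coeff_eq_of_mul_one_sub_trinomial_eq_one {Φ : R⟦X⟧} (A B : R) {ℓ L : ℕ}
    (hℓ : 0 < ℓ) (hL : 0 < L) (hΦ : Φ * (1 - (X + C A * X ^ ℓ + C B * X ^ L)) = 1) (n : ℕ) :
    coeff n Φ =
      ∑ u ∈ range (n / ℓ + 1), ∑ v ∈ range ((n - u * ℓ) / L + 1),
        ((n - u * (ℓ - 1) - v * (L - 1))! / ((n - u * ℓ - v * L)! * u ! * v !)) •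
          (A ^ u * B ^ v) := by
  have hw : constantCoeff (X + C A * X ^ ℓ + C B * X ^ L) = 0 := by
    simp [zero_pow hℓ.ne', zero_pow hL.ne']
  rw [coeff_eq_coeff_sum_range_pow hΦ hw, coeff_sum_range_trinomial_pow A B hℓ hL,
    ← sum_latticeTriangle hℓ hL]
  refine sum_congr rfl fun p hp => ?_
  rw [mem_latticeTriangle hℓ hL] at hp
  have := Nat.le_mul_of_pos_right p.1 hℓ
  have := Nat.le_mul_of_pos_right p.2 hL
  rw [multinomial_univ_three, Nat.mul_sub_one, Nat.mul_sub_one]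
  congr 4
  omega

end

theorem stmt_1_general (p q : ℝ) (ℓ₁ ℓ₂ k₁ : ℕ) (hℓ₁ : 1 ≤ ℓ₁)
    (Φ : PowerSeries (Polynomial ℝ))
    (hΦ : Φ * (1 - PowerSeries.X -
      PowerSeries.C (Polynomial.C (q ^ ℓ₁ * p ^ ℓ₂) * (Polynomial.X - 1)) *
        PowerSeries.X ^ (ℓ₁ + ℓ₂) *
        (1 - (PowerSeries.C (Polynomial.C q) * PowerSeries.X) ^ (k₁ - ℓ₁ + 1)))
      = 1) :
    ∀ n : ℕ, (PowerSeries.coeff n) Φ =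
      ∑ u ∈ Finset.range (n / (ℓ₁ + ℓ₂) + 1),
        ∑ v ∈ Finset.range ((n - u * (ℓ₁ + ℓ₂)) / ((ℓ₁ + ℓ₂) + (k₁ - ℓ₁ + 1)) + 1),
          (Nat.factorial (n - u * (ℓ₁ + ℓ₂ - 1) - v * ((ℓ₁ + ℓ₂) + (k₁ - ℓ₁ + 1) - 1)) /
            (Nat.factorial (n - u * (ℓ₁ + ℓ₂) - v * ((ℓ₁ + ℓ₂) + (k₁ - ℓ₁ + 1))) *
              Nat.factorial u * Nat.factorial v) : ℕ) •
            ((-1 : Polynomial ℝ) ^ v * Polynomial.C (q ^ (v * (k₁ - ℓ₁ + 1))) *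
              (Polynomial.C (q ^ ℓ₁ * p ^ ℓ₂) * (Polynomial.X - 1)) ^ (u + v)) := by
  set a := Polynomial.C (q ^ ℓ₁ * p ^ ℓ₂) * (Polynomial.X - 1)
  set m₁ := k₁ - ℓ₁ + 1
  set b := -(Polynomial.C (q ^ m₁) * a)
  have h_trinomial : 1 - X - C a * X ^ (ℓ₁ + ℓ₂) * (1 - (C (Polynomial.C q) * X) ^ m₁) =
      1 - (X + C a * X ^ (ℓ₁ + ℓ₂) + C b * X ^ (ℓ₁ + ℓ₂ + m₁)) := by
    simp only [b, map_neg, map_mul, map_pow, mul_pow]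
    ring
  rw [h_trinomial] at hΦ
  intro n
  rw [coeff_eq_of_mul_one_sub_trinomial_eq_one a b (by omega) (by omega) hΦ n]
  refine sum_congr rfl fun u _ => sum_congr rfl fun v _ => ?_
  have hb : b ^ v = (-1) ^ v * Polynomial.C (q ^ (v * m₁)) * a ^ v := by
    rw [neg_pow, mul_pow, ← map_pow, ← pow_mul, mul_comm m₁ v, mul_assoc]
  rw [hb, pow_add]
  ring

/-- Explicit form of the coefficients of the double PGF
`Φ(t,z) = 1 / (1 - z - a z^ℓ (t-1)(1-(qz)^{m₁}))` with `a = q^{ℓ₁} p^{ℓ₂}`,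
`ℓ = ℓ₁+ℓ₂`, `m₁ = k₁-ℓ₁+1`, as formal power series over `ℝ[t]`. -/
theorem stmt_1 (p q : ℝ) (ℓ₁ ℓ₂ k₁ : ℕ) (hℓ₁ : 1 ≤ ℓ₁) (hℓ₂ : 1 ≤ ℓ₂) (hk₁ : ℓ₁ ≤ k₁)
    (Φ : PowerSeries (Polynomial ℝ))
    (hΦ : Φ * (1 - PowerSeries.X -
      PowerSeries.C (Polynomial.C (q ^ ℓ₁ * p ^ ℓ₂) * (Polynomial.X - 1)) *
        PowerSeries.X ^ (ℓ₁ + ℓ₂) *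
        (1 - (PowerSeries.C (Polynomial.C q) * PowerSeries.X) ^ (k₁ - ℓ₁ + 1)))
      = 1) :
    ∀ n : ℕ, (PowerSeries.coeff n) Φ =
      ∑ u ∈ Finset.range (n / (ℓ₁ + ℓ₂) + 1),
        ∑ v ∈ Finset.range ((n - u * (ℓ₁ + ℓ₂)) / ((ℓ₁ + ℓ₂) + (k₁ - ℓ₁ + 1)) + 1),
          (Nat.factorial (n - u * (ℓ₁ + ℓ₂ - 1) - v * ((ℓ₁ + ℓ₂) + (k₁ - ℓ₁ + 1) - 1)) /
            (Nat.factorial (n - u * (ℓ₁ + ℓ₂) - v * ((ℓ₁ + ℓ₂) + (k₁ - ℓ₁ + 1))) *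
              Nat.factorial u * Nat.factorial v) : ℕ) •
            ((-1 : Polynomial ℝ) ^ v * Polynomial.C (q ^ (v * (k₁ - ℓ₁ + 1))) *
              (Polynomial.C (q ^ ℓ₁ * p ^ ℓ₂) * (Polynomial.X - 1)) ^ (u + v)) :=
  stmt_1_general p q ℓ₁ ℓ₂ k₁ hℓ₁ Φ hΦ
end

section
/- In the formal power series ring ℝ[[z]] (with parameter t a real number, |statement as formal identity in ℝ[t][[z]]|), for a = q^{ℓ₁}p^{ℓ₂}, ℓ = ℓ₁+ℓ₂, m₁ = k₁−ℓ₁+1: if Φ(t,z)·(1 − z − a zˡ(t−1)(1−(qz)^{m₁})) = 1, then the coefficients φₙ(t) of Φ satisfy φₙ(t) = φₙ₋₁(t) + a(t−1)[φₙ₋ℓ(t) − q^{m₁}φₙ₋ℓ₋ₘ₁(t)] for all n ≥ ℓ + m₁, and φₙ(t) = 1 for all 0 ≤ n ≤ ℓ−1. -/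
/-!
Multiplying out `Φ · (1 - z - c zˡ (1 - (rz)ᵐ)) = 1` gives
`Φ = 1 + zΦ + c zˡ Φ - c rᵐ z^(ℓ+m) Φ`; comparing coefficients of `zⁿ` yields the recurrence as
soon as every shift fits into `n`, and for `n < ℓ` only the terms `1 + zΦ` contribute, so the
coefficients stay equal to `φ₀ = 1`.
-/

namespace PowerSeries

variable {R : Type*} [CommRing R] {Φ : R⟦X⟧} {c r : R} {ℓ m : ℕ}

/-- In the theorem, `c = a(t - 1)` and `r = q`. -/
noncomputable def runDenominator (c r : R) (ℓ m : ℕ) : R⟦X⟧ :=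
  1 - X - C c * X ^ ℓ * (1 - (C r * X) ^ m)

theorem eq_of_mul_runDenominator_eq_one (h : Φ * runDenominator c r ℓ m = 1) :
    Φ = 1 + X * Φ + C c * (X ^ ℓ * Φ) - C (c * r ^ m) * (X ^ (ℓ + m) * Φ) := by
  rw [runDenominator, mul_pow, ← map_pow] at h
  rw [map_mul]
  linear_combination h

theorem coeff_eq_of_mul_runDenominator_eq_one (h : Φ * runDenominator c r ℓ m = 1) (n : ℕ) :
    coeff n Φ = (if n = 0 then 1 else 0) + (if 1 ≤ n then coeff (n - 1) Φ else 0)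
      + c * (if ℓ ≤ n then coeff (n - ℓ) Φ else 0)
      - c * r ^ m * (if ℓ + m ≤ n then coeff (n - (ℓ + m)) Φ else 0) := by
  conv_lhs => rw [eq_of_mul_runDenominator_eq_one h]
  simp only [map_add, map_sub, coeff_one, coeff_C_mul, coeff_X_pow_mul', mul_ite, mul_zero]
  rw [← pow_one (X : R⟦X⟧), coeff_X_pow_mul']

theorem coeff_recurrence_of_mul_runDenominator_eq_one
    (h : Φ * runDenominator c r ℓ m = 1) {n : ℕ} (hn : ℓ + m ≤ n) (hn₀ : n ≠ 0) :
    coeff n Φ = coeff (n - 1) Φ + c * (coeff (n - ℓ) Φ - r ^ m * coeff (n - ℓ - m) Φ) := by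
  rw [coeff_eq_of_mul_runDenominator_eq_one h n, if_neg hn₀, if_pos (by omega), if_pos (by omega),
    if_pos hn, Nat.sub_add_eq]
  ring

theorem coeff_eq_one_of_mul_runDenominator_eq_one
    (h : Φ * runDenominator c r ℓ m = 1) (hℓ : 1 ≤ ℓ) :
    ∀ n < ℓ, coeff n Φ = 1
  | 0, _ => by
    simp [coeff_eq_of_mul_runDenominator_eq_one h 0, show ¬ℓ = 0 by omega]
  | n + 1, hn => by
    rw [coeff_eq_of_mul_runDenominator_eq_one h (n + 1)]
    simp [show ¬ℓ ≤ n + 1 by omega, show ¬ℓ + m ≤ n + 1 by omega,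
      coeff_eq_one_of_mul_runDenominator_eq_one h hℓ n (by omega)]

end PowerSeries

theorem stmt_2_general (p q : ℝ) (ℓ₁ ℓ₂ k₁ : ℕ) (hℓ₁ : 1 ≤ ℓ₁)
    (Φ : PowerSeries (Polynomial ℝ))
    (hΦ : Φ * (1 - PowerSeries.X -
      (PowerSeries.C (R := Polynomial ℝ)) (Polynomial.C (q ^ ℓ₁ * p ^ ℓ₂) * (Polynomial.X - 1)) *
        PowerSeries.X ^ (ℓ₁ + ℓ₂) *
        (1 - ((PowerSeries.C (R := Polynomial ℝ)) (Polynomial.C q) * PowerSeries.X) ^ (k₁ - ℓ₁ + 1)))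
      = 1) :
    (∀ n : ℕ, (ℓ₁ + ℓ₂) + (k₁ - ℓ₁ + 1) ≤ n →
      (PowerSeries.coeff (R := Polynomial ℝ) n) Φ =
        (PowerSeries.coeff (R := Polynomial ℝ) (n - 1)) Φ +
          Polynomial.C (q ^ ℓ₁ * p ^ ℓ₂) * (Polynomial.X - 1) *
            ((PowerSeries.coeff (R := Polynomial ℝ) (n - (ℓ₁ + ℓ₂))) Φ -
              Polynomial.C (q ^ (k₁ - ℓ₁ + 1)) *
                (PowerSeries.coeff (R := Polynomial ℝ) (n - (ℓ₁ + ℓ₂) - (k₁ - ℓ₁ + 1))) Φ)) ∧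
    (∀ n : ℕ, n ≤ ℓ₁ + ℓ₂ - 1 → (PowerSeries.coeff (R := Polynomial ℝ) n) Φ = 1) := by
  refine ⟨fun n hn => ?_, fun n hn => ?_⟩
  · rw [map_pow]
    exact PowerSeries.coeff_recurrence_of_mul_runDenominator_eq_one hΦ hn (by omega)
  · exact PowerSeries.coeff_eq_one_of_mul_runDenominator_eq_one hΦ (by omega) n (by omega)

/-- Recursive relation for the coefficients `φₙ(t)` of the double PGF
`Φ(t,z) = 1/(1 - z - a z^ℓ (t-1)(1-(qz)^{m₁}))`, where `a = q^{ℓ₁} p^{ℓ₂}`,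
`ℓ = ℓ₁+ℓ₂`, `m₁ = k₁-ℓ₁+1`. -/
theorem stmt_2 (p q : ℝ) (ℓ₁ ℓ₂ k₁ : ℕ) (hℓ₁ : 1 ≤ ℓ₁) (hℓ₂ : 1 ≤ ℓ₂) (hk₁ : ℓ₁ ≤ k₁)
    (Φ : PowerSeries (Polynomial ℝ))
    (hΦ : Φ * (1 - PowerSeries.X -
      (PowerSeries.C (R := Polynomial ℝ)) (Polynomial.C (q ^ ℓ₁ * p ^ ℓ₂) * (Polynomial.X - 1)) *
        PowerSeries.X ^ (ℓ₁ + ℓ₂) *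
        (1 - ((PowerSeries.C (R := Polynomial ℝ)) (Polynomial.C q) * PowerSeries.X) ^ (k₁ - ℓ₁ + 1)))
      = 1) :
    (∀ n : ℕ, (ℓ₁ + ℓ₂) + (k₁ - ℓ₁ + 1) ≤ n →
      (PowerSeries.coeff (R := Polynomial ℝ) n) Φ =
        (PowerSeries.coeff (R := Polynomial ℝ) (n - 1)) Φ +
          Polynomial.C (q ^ ℓ₁ * p ^ ℓ₂) * (Polynomial.X - 1) *
            ((PowerSeries.coeff (R := Polynomial ℝ) (n - (ℓ₁ + ℓ₂))) Φ -
              Polynomial.C (q ^ (k₁ - ℓ₁ + 1)) *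
                (PowerSeries.coeff (R := Polynomial ℝ) (n - (ℓ₁ + ℓ₂) - (k₁ - ℓ₁ + 1))) Φ)) ∧
    (∀ n : ℕ, n ≤ ℓ₁ + ℓ₂ - 1 → (PowerSeries.coeff (R := Polynomial ℝ) n) Φ = 1) :=
  stmt_2_general p q ℓ₁ ℓ₂ k₁ hℓ₁ Φ hΦ
end

section
/- In ℝ[t][[z]], with a = q^{ℓ₁}p^{ℓ₂}, ℓ = ℓ₁+ℓ₂, m₂ = k₂−ℓ₂+1: if Φ(t,z)·(1 − z − a zˡ(t−1)(1 − (pz)^{m₂})) = 1 − a zˡ(t−1)·Σ_{i=1}^{m₂} (pz)^{i−1}, then the coefficients φₙ(t) of zⁿ in Φ satisfy, for n ≥ ℓ + m₂: φₙ(t) = φₙ₋₁(t) + a(t−1)[φₙ₋ℓ(t) − p^{m₂}φₙ₋ℓ₋ₘ₂(t)], and for ℓ+1 ≤ n ≤ ℓ+m₂−1: φₙ(t) = φₙ₋₁(t) + a(t−1)φₙ₋ℓ(t) − a(t−1)p^{n−ℓ}, and φₙ(t) = 1 for 0 ≤ n ≤ ℓ. -/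
/-!
Write `Φ = N / D` with `D = 1 - z - a zˡ (1 - (bz)ᵐ)` and `N = 1 - a zˡ ∑_{i<m} (bz)ⁱ`.
Comparing coefficients of `z^(n+1)` in `Φ D = N`, where coefficients at negative indices vanish,
gives `φₙ₊₁ = φₙ + a (φₙ₊₁₋ₗ - bᵐ φₙ₊₁₋ₗ₋ₘ) - a bⁿ⁺¹⁻ˡ [ℓ ≤ n + 1 < ℓ + m]`, which is the
recurrence in both ranges. Since `ℓ ≥ 1`, the constant terms give `φ₀ = 1`; below `zˡ` the
recurrence is `φₙ₊₁ = φₙ`, and at `zˡ` the two correction terms `a φ₀` and `a b⁰` cancel.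
-/

open PowerSeries Finset

namespace PowerSeries

variable {R : Type*} [CommRing R]

/-- With `a = q^ℓ₁ p^ℓ₂ (t - 1)`, `b = p`, `ℓ = ℓ₁ + ℓ₂` and `m = m₂`, the double PGF is
`runNumer a b ℓ m / runDenom a b ℓ m`. -/
noncomputable def runDenom (a b : R) (ℓ m : ℕ) : R⟦X⟧ :=
  1 - X - C a * X ^ ℓ * (1 - (C b * X) ^ m)

noncomputable def runNumer (a b : R) (ℓ m : ℕ) : R⟦X⟧ :=
  1 - C a * X ^ ℓ * ∑ i ∈ range m, (C b * X) ^ i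

theorem coeff_X_pow_mul_geom_sum (b : R) (ℓ m n : ℕ) :
    coeff n (X ^ ℓ * ∑ i ∈ range m, (C b * X) ^ i) =
      if ℓ ≤ n ∧ n < ℓ + m then b ^ (n - ℓ) else 0 := by
  simp only [coeff_X_pow_mul', map_sum, mul_pow, ← map_pow, coeff_C_mul_X_pow,
    sum_ite_eq, mem_range]
  split_ifs <;> first | rfl | omega

theorem coeff_succ_mul_runDenom (Φ : R⟦X⟧) (a b : R) (ℓ m n : ℕ) :
    coeff (n + 1) (Φ * runDenom a b ℓ m) = coeff (n + 1) Φ - coeff n Φ -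
      a * ((if ℓ ≤ n + 1 then coeff (n + 1 - ℓ) Φ else 0) -
        b ^ m * if ℓ + m ≤ n + 1 then coeff (n + 1 - (ℓ + m)) Φ else 0) := by
  have hexpand : Φ * runDenom a b ℓ m =
      Φ - Φ * X - C a * (Φ * X ^ ℓ - C (b ^ m) * (Φ * X ^ (ℓ + m))) := by
    simp only [runDenom, map_pow]
    ring
  simp only [hexpand, map_sub, coeff_C_mul, coeff_mul_X_pow', coeff_succ_mul_X]

theorem coeff_succ_runNumer (a b : R) (ℓ m n : ℕ) :
    coeff (n + 1) (runNumer a b ℓ m) =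
      -(a * if ℓ ≤ n + 1 ∧ n + 1 < ℓ + m then b ^ (n + 1 - ℓ) else 0) := by
  simp [runNumer, mul_assoc, coeff_C_mul, coeff_X_pow_mul_geom_sum]

variable {Φ : R⟦X⟧} {a b : R} {ℓ m : ℕ}

theorem coeff_succ_of_mul_runDenom_eq (hΦ : Φ * runDenom a b ℓ m = runNumer a b ℓ m) (n : ℕ) :
    coeff (n + 1) Φ = coeff n Φ +
      a * ((if ℓ ≤ n + 1 then coeff (n + 1 - ℓ) Φ else 0) -
        b ^ m * if ℓ + m ≤ n + 1 then coeff (n + 1 - (ℓ + m)) Φ else 0) -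
      a * (if ℓ ≤ n + 1 ∧ n + 1 < ℓ + m then b ^ (n + 1 - ℓ) else 0) := by
  have h := congrArg (coeff (n + 1)) hΦ
  rw [coeff_succ_mul_runDenom, coeff_succ_runNumer] at h
  linear_combination h

theorem coeff_zero_of_mul_runDenom_eq (hℓ : 1 ≤ ℓ)
    (hΦ : Φ * runDenom a b ℓ m = runNumer a b ℓ m) : coeff 0 Φ = 1 := by
  obtain ⟨ℓ, rfl⟩ := Nat.exists_eq_add_of_le' hℓ
  have h := congrArg (coeff 0) hΦ
  simpa [runDenom, runNumer, mul_sub, pow_succ, ← mul_assoc] using h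

theorem coeff_eq_one_of_mul_runDenom_eq (hℓ : 1 ≤ ℓ) (hm : 1 ≤ m)
    (hΦ : Φ * runDenom a b ℓ m = runNumer a b ℓ m) {n : ℕ} (hn : n ≤ ℓ) : coeff n Φ = 1 := by
  induction n with
  | zero => exact coeff_zero_of_mul_runDenom_eq hℓ hΦ
  | succ n ih =>
    rw [coeff_succ_of_mul_runDenom_eq hΦ, ih (by omega)]
    rcases (by omega : n + 1 < ℓ ∨ n + 1 = ℓ) with hlt | rfl
    · simp [hlt.not_ge, show ¬ℓ + m ≤ n + 1 by omega]
    · simp [coeff_zero_of_mul_runDenom_eq hℓ hΦ, show m ≠ 0 by omega, show 0 < m by omega]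

end PowerSeries

theorem stmt_15_general (p q : ℝ) (ℓ₁ ℓ₂ k₂ : ℕ) (hℓ₁ : 1 ≤ ℓ₁)
    (Φ : PowerSeries (Polynomial ℝ))
    (hΦ : Φ * (1 - PowerSeries.X -
        PowerSeries.C (Polynomial.C (q ^ ℓ₁ * p ^ ℓ₂) * (Polynomial.X - 1)) *
          PowerSeries.X ^ (ℓ₁ + ℓ₂) *
          (1 - (PowerSeries.C (Polynomial.C p) * PowerSeries.X) ^ (k₂ - ℓ₂ + 1)))
      = 1 - PowerSeries.C (Polynomial.C (q ^ ℓ₁ * p ^ ℓ₂) * (Polynomial.X - 1)) *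
          PowerSeries.X ^ (ℓ₁ + ℓ₂) *
          ∑ i ∈ Finset.range (k₂ - ℓ₂ + 1),
            (PowerSeries.C (Polynomial.C p) * PowerSeries.X) ^ i) :
    (∀ n : ℕ, (ℓ₁ + ℓ₂) + (k₂ - ℓ₂ + 1) ≤ n →
      (PowerSeries.coeff n) Φ =
        (PowerSeries.coeff (n - 1)) Φ +
          Polynomial.C (q ^ ℓ₁ * p ^ ℓ₂) * (Polynomial.X - 1) *
            ((PowerSeries.coeff (n - (ℓ₁ + ℓ₂))) Φ -
              Polynomial.C (p ^ (k₂ - ℓ₂ + 1)) *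
                (PowerSeries.coeff (n - (ℓ₁ + ℓ₂) - (k₂ - ℓ₂ + 1))) Φ)) ∧
    (∀ n : ℕ, (ℓ₁ + ℓ₂) + 1 ≤ n → n ≤ (ℓ₁ + ℓ₂) + (k₂ - ℓ₂ + 1) - 1 →
      (PowerSeries.coeff n) Φ =
        (PowerSeries.coeff (n - 1)) Φ +
          Polynomial.C (q ^ ℓ₁ * p ^ ℓ₂) * (Polynomial.X - 1) *
            (PowerSeries.coeff (n - (ℓ₁ + ℓ₂))) Φ -
          Polynomial.C (q ^ ℓ₁ * p ^ ℓ₂) * (Polynomial.X - 1) *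
            Polynomial.C (p ^ (n - (ℓ₁ + ℓ₂)))) ∧
    (∀ n : ℕ, n ≤ ℓ₁ + ℓ₂ → (PowerSeries.coeff n) Φ = 1) := by
  set ℓ := ℓ₁ + ℓ₂
  set m := k₂ - ℓ₂ + 1
  have hΦ : Φ * runDenom _ (Polynomial.C p) ℓ m = runNumer _ (Polynomial.C p) ℓ m := hΦ
  refine ⟨fun n hn => ?_, fun n hn₁ hn₂ => ?_,
    fun n hn => coeff_eq_one_of_mul_runDenom_eq (by omega) (by omega) hΦ hn⟩
  · obtain ⟨n, rfl⟩ : ∃ k, n = k + 1 := ⟨n - 1, by omega⟩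
    rw [coeff_succ_of_mul_runDenom_eq hΦ, if_pos (by omega : ℓ ≤ n + 1), if_pos hn,
      if_neg (by omega : ¬(ℓ ≤ n + 1 ∧ n + 1 < ℓ + m)), Nat.sub_sub, Polynomial.C_pow]
    simp
  · obtain ⟨n, rfl⟩ : ∃ k, n = k + 1 := ⟨n - 1, by omega⟩
    rw [coeff_succ_of_mul_runDenom_eq hΦ, if_pos (by omega : ℓ ≤ n + 1),
      if_neg (by omega : ¬ℓ + m ≤ n + 1), if_pos (by omega : ℓ ≤ n + 1 ∧ n + 1 < ℓ + m),
      Polynomial.C_pow]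
    simp

/-- Recursive relations for the coefficients `φₙ(t)` of the double PGF of
`H^n_{ℓ₁,ℓ₂,k₂}`, where `a = q^{ℓ₁} p^{ℓ₂}`, `ℓ = ℓ₁+ℓ₂`, `m₂ = k₂-ℓ₂+1`. -/
theorem stmt_15 (p q : ℝ) (ℓ₁ ℓ₂ k₂ : ℕ) (hℓ₁ : 1 ≤ ℓ₁) (hℓ₂ : 1 ≤ ℓ₂) (hk₂ : ℓ₂ ≤ k₂)
    (Φ : PowerSeries (Polynomial ℝ))
    (hΦ : Φ * (1 - PowerSeries.X -
        PowerSeries.C (Polynomial.C (q ^ ℓ₁ * p ^ ℓ₂) * (Polynomial.X - 1)) *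
          PowerSeries.X ^ (ℓ₁ + ℓ₂) *
          (1 - (PowerSeries.C (Polynomial.C p) * PowerSeries.X) ^ (k₂ - ℓ₂ + 1)))
      = 1 - PowerSeries.C (Polynomial.C (q ^ ℓ₁ * p ^ ℓ₂) * (Polynomial.X - 1)) *
          PowerSeries.X ^ (ℓ₁ + ℓ₂) *
          ∑ i ∈ Finset.range (k₂ - ℓ₂ + 1),
            (PowerSeries.C (Polynomial.C p) * PowerSeries.X) ^ i) :
    (∀ n : ℕ, (ℓ₁ + ℓ₂) + (k₂ - ℓ₂ + 1) ≤ n →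
      (PowerSeries.coeff n) Φ =
        (PowerSeries.coeff (n - 1)) Φ +
          Polynomial.C (q ^ ℓ₁ * p ^ ℓ₂) * (Polynomial.X - 1) *
            ((PowerSeries.coeff (n - (ℓ₁ + ℓ₂))) Φ -
              Polynomial.C (p ^ (k₂ - ℓ₂ + 1)) *
                (PowerSeries.coeff (n - (ℓ₁ + ℓ₂) - (k₂ - ℓ₂ + 1))) Φ)) ∧
    (∀ n : ℕ, (ℓ₁ + ℓ₂) + 1 ≤ n → n ≤ (ℓ₁ + ℓ₂) + (k₂ - ℓ₂ + 1) - 1 →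
      (PowerSeries.coeff n) Φ =
        (PowerSeries.coeff (n - 1)) Φ +
          Polynomial.C (q ^ ℓ₁ * p ^ ℓ₂) * (Polynomial.X - 1) *
            (PowerSeries.coeff (n - (ℓ₁ + ℓ₂))) Φ -
          Polynomial.C (q ^ ℓ₁ * p ^ ℓ₂) * (Polynomial.X - 1) *
            Polynomial.C (p ^ (n - (ℓ₁ + ℓ₂)))) ∧
    (∀ n : ℕ, n ≤ ℓ₁ + ℓ₂ → (PowerSeries.coeff n) Φ = 1) :=
  stmt_15_general p q ℓ₁ ℓ₂ k₂ hℓ₁ Φ hΦ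
end
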